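/- arXiv:math/0311481 — 2 statements merged into one kernel-verified Lean document; each statement's English description precedes it below -/
import Mathlib

section
/- For every dimension d ≥ 1 there is a constant C = C(d) > 0 such that for every n ≥ 1, every family of points v_1, …, v_n ∈ [0,1]^d, and every minimal spanning tree T over v_1, …, v_n, one has Σ_{{i,j} ∈ E(T)} ‖v_i − v_j‖^d ≤ C^d; in particular the bound is independent of n. -/
/-!
Cut property: let `ab` and `cd` be distinct edges of a minimal spanning tree with `|ab| ≤ |cd|`,
and say `a` and `b` stay on the side of `c` when `cd` is removed. Replacing `cd` by `ad` or by
`bd` gives spanning trees, so `|ad|, |bd| ≥ |cd|`, and Apollonius' theorem puts the midpoint of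
`ab` at distance at least `(√3/2)|cd|` from `d`, hence at least `|cd|/3` from the midpoint of
`cd`. Thus the balls of radius `|e|/6` about the midpoints of the edges `e` are pairwise
disjoint. If the points lie in a ball of radius `ρ`, these balls lie in a ball of radius `4ρ/3`,
and comparing volumes gives `Σ |e|^d ≤ (8ρ)^d`.
-/

/-- The `α`-energy of a graph `T` on vertex set `Fin n`, with vertex `i` placed at
`v i` in the metric space `X`: the sum over the edges `{i,j}` of `T` of
`dist (v i) (v j) ^ α`. -/
noncomputable def energy {X : Type*} [MetricSpace X] {n : ℕ} (v : Fin n → X)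
    (T : SimpleGraph (Fin n)) (α : ℝ) : ℝ :=
  ∑ e ∈ T.edgeSet.toFinite.toFinset,
    Sym2.lift ⟨fun i j => dist (v i) (v j) ^ α, fun i j => by simp only [dist_comm]⟩ e

/-- `T` is a minimal spanning tree over the points `v 0, …, v (n-1)`: it is a tree on
the vertex set `Fin n` minimizing the total edge length `E₁` among all such trees. -/
def IsMST {X : Type*} [MetricSpace X] {n : ℕ} (v : Fin n → X)
    (T : SimpleGraph (Fin n)) : Prop :=
  T.IsTree ∧ ∀ T' : SimpleGraph (Fin n), T'.IsTree → energy v T 1 ≤ energy v T' 1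

open Finset Metric MeasureTheory Module

namespace SimpleGraph

variable {V : Type*} {T : SimpleGraph V}

theorem Reachable.reachable_deleteEdges_or {u c : V} (d : V) (h : T.Reachable u c) :
    (T.deleteEdges {s(c, d)}).Reachable u c ∨ (T.deleteEdges {s(c, d)}).Reachable u d := by
  have hwalk : ∀ {u' w}, T.Walk u' w → (T.deleteEdges {s(c, d)}).Reachable w c ∨
      (T.deleteEdges {s(c, d)}).Reachable w d →
      (T.deleteEdges {s(c, d)}).Reachable u' c ∨ (T.deleteEdges {s(c, d)}).Reachable u' d := by
    intro u' w q
    induction q with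
    | nil => exact id
    | @cons p q w hpq _ ih =>
      intro hw
      by_cases he : s(p, q) = s(c, d)
      · rcases Sym2.eq_iff.mp he with ⟨rfl, -⟩ | ⟨rfl, -⟩
        · exact .inl .rfl
        · exact .inr .rfl
      · have hpq' : (T.deleteEdges {s(c, d)}).Adj p q := by
          rw [deleteEdges_adj, Set.mem_singleton_iff]; exact ⟨hpq, he⟩
        exact (ih hw).imp hpq'.reachable.trans hpq'.reachable.trans
  obtain ⟨p⟩ := h
  exact hwalk p (.inl .rfl)

theorem IsAcyclic.not_reachable_deleteEdges {a b : V} (hT : T.IsAcyclic) (hab : T.Adj a b) :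
    ¬ (T.deleteEdges {s(a, b)}).Reachable a b :=
  isAcyclic_iff_forall_adj_isBridge.mp hT hab

theorem IsTree.deleteEdges_sup_edge {a b x y : V} (hT : T.IsTree) (hab : T.Adj a b)
    (hax : (T.deleteEdges {s(a, b)}).Reachable a x)
    (hby : (T.deleteEdges {s(a, b)}).Reachable b y) :
    (T.deleteEdges {s(a, b)} ⊔ edge x y).IsTree := by
  set G := T.deleteEdges {s(a, b)}
  have hxy : ¬ G.Reachable x y := fun h =>
    IsAcyclic.not_reachable_deleteEdges hT.isAcyclic hab (hax.trans (h.trans hby.symm))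
  refine ⟨(connected_iff_exists_forall_reachable _).2 ⟨a, fun u => ?_⟩,
    (hT.isAcyclic.anti (deleteEdges_le _)).sup_edge_of_not_reachable hxy⟩
  have hG : G ≤ G ⊔ edge x y := le_sup_left
  have hxy' : (G ⊔ edge x y).Adj x y := by
    refine Or.inr ((edge_adj ..).2 ⟨.inl ⟨rfl, rfl⟩, ?_⟩)
    rintro rfl
    exact hxy .rfl
  have hab' : (G ⊔ edge x y).Reachable a b :=
    ((hax.mono hG).trans hxy'.reachable).trans (hby.mono hG).symm
  rcases (hT.connected.preconnected u a).reachable_deleteEdges_or b with h | h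
  · exact (h.mono hG).symm
  · exact hab'.trans (h.mono hG).symm

end SimpleGraph

section EdgeGeometry

variable {V X : Type*}

def edgeLength [PseudoMetricSpace X] (v : V → X) : Sym2 V → ℝ :=
  Sym2.lift ⟨fun i j => dist (v i) (v j), fun _ _ => dist_comm _ _⟩

@[simp]
theorem edgeLength_mk [PseudoMetricSpace X] (v : V → X) (i j : V) :
    edgeLength v s(i, j) = dist (v i) (v j) := rfl

theorem edgeLength_nonneg [PseudoMetricSpace X] (v : V → X) (e : Sym2 V) :
    0 ≤ edgeLength v e := by
  induction e using Sym2.ind with | _ i j => exact dist_nonneg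

end EdgeGeometry

section MinimalSpanningTree

variable {X : Type*} [MetricSpace X] {n : ℕ} {T : SimpleGraph (Fin n)}

theorem energy_eq_sum_edgeLength_rpow (v : Fin n → X) (α : ℝ) {s : Finset (Sym2 (Fin n))}
    (hs : (s : Set (Sym2 (Fin n))) = T.edgeSet) :
    energy v T α = ∑ e ∈ s, edgeLength v e ^ α := by
  have hs' : T.edgeSet.toFinite.toFinset = s := by ext; simp [← hs]
  rw [energy, hs']
  refine sum_congr rfl fun e _ => ?_
  induction e using Sym2.ind with | _ i j => rfl

open SimpleGraph in
theorem energy_deleteEdges_sup_edge (v : Fin n → X) (α : ℝ) {a b x y : Fin n}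
    (hab : T.Adj a b) (hxy : ¬ (T.deleteEdges {s(a, b)}).Adj x y) (hne : x ≠ y) :
    energy v (T.deleteEdges {s(a, b)} ⊔ edge x y) α =
      energy v T α - dist (v a) (v b) ^ α + dist (v x) (v y) ^ α := by
  classical
  set S := T.edgeSet.toFinite.toFinset
  have hab' : s(a, b) ∈ S := by simpa [S] using hab
  have hxy' : s(x, y) ∉ S.erase s(a, b) := by
    simpa [S, deleteEdges_adj, and_comm] using hxy
  rw [energy_eq_sum_edgeLength_rpow v α (s := insert s(x, y) (S.erase s(a, b))),
    energy_eq_sum_edgeLength_rpow v α (s := S) (by simp [S]), sum_insert hxy',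
    ← add_sum_erase S _ hab']
  · simp only [edgeLength_mk]
    ring
  · ext e
    simp [S, edgeSet_edge_of_ne hne]

theorem IsMST.dist_le_of_reachable_deleteEdges {v : Fin n → X} (hT : IsMST v T) {a b x y : Fin n}
    (hab : T.Adj a b) (hax : (T.deleteEdges {s(a, b)}).Reachable a x)
    (hby : (T.deleteEdges {s(a, b)}).Reachable b y) :
    dist (v a) (v b) ≤ dist (v x) (v y) := by
  have hxy : ¬ (T.deleteEdges {s(a, b)}).Reachable x y := fun h =>
    hT.1.isAcyclic.not_reachable_deleteEdges hab (hax.trans (h.trans hby.symm))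
  have hne : x ≠ y := by
    rintro rfl
    exact hxy .rfl
  have hmin := hT.2 _ (hT.1.deleteEdges_sup_edge hab hax hby)
  rw [energy_deleteEdges_sup_edge v 1 hab (fun h => hxy h.reachable) hne, Real.rpow_one,
    Real.rpow_one] at hmin
  linarith

end MinimalSpanningTree

section InnerProductSpace

variable {E : Type*} [NormedAddCommGroup E] [InnerProductSpace ℝ E]

theorem dist_div_three_le_dist_midpoint_midpoint {a b c d : E} (hac : dist c d ≤ dist a d)
    (hbc : dist c d ≤ dist b d) (hab : dist a b ≤ dist c d) :
    dist c d / 3 ≤ dist (midpoint ℝ a b) (midpoint ℝ c d) := by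
  have hapollonius :=
    EuclideanGeometry.dist_sq_add_dist_sq_eq_two_mul_dist_midpoint_sq_add_half_dist_sq d a b
  have hfar : 5 / 6 * dist c d ≤ dist d (midpoint ℝ a b) := by
    rw [dist_comm d a, dist_comm d b] at hapollonius
    nlinarith [dist_nonneg (x := c) (y := d), dist_nonneg (x := a) (y := b),
      dist_nonneg (x := d) (y := midpoint ℝ a b)]
  have hnear : dist d (midpoint ℝ c d) = dist c d / 2 := by
    rw [dist_right_midpoint, Real.norm_two]
    ring
  linarith [dist_triangle d (midpoint ℝ c d) (midpoint ℝ a b),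
    dist_comm (midpoint ℝ a b) (midpoint ℝ c d)]

noncomputable def edgeMidpoint {V : Type*} (v : V → E) : Sym2 V → E :=
  Sym2.lift ⟨fun i j => midpoint ℝ (v i) (v j), fun _ _ => midpoint_comm _ _⟩

@[simp]
theorem edgeMidpoint_mk {V : Type*} (v : V → E) (i j : V) :
    edgeMidpoint v s(i, j) = midpoint ℝ (v i) (v j) := rfl

variable {n : ℕ} {v : Fin n → E} {T : SimpleGraph (Fin n)}

theorem IsMST.dist_div_three_le_dist_midpoint_midpoint (hT : IsMST v T) {a b c d : Fin n}
    (hab : T.Adj a b) (hcd : T.Adj c d) (hne : s(a, b) ≠ s(c, d))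
    (hle : dist (v a) (v b) ≤ dist (v c) (v d)) :
    dist (v c) (v d) / 3 ≤ dist (midpoint ℝ (v a) (v b)) (midpoint ℝ (v c) (v d)) := by
  have hcut : ∀ {c d}, T.Adj c d → s(a, b) ≠ s(c, d) →
      dist (v a) (v b) ≤ dist (v c) (v d) → (T.deleteEdges {s(c, d)}).Reachable c a →
      dist (v c) (v d) / 3 ≤ dist (midpoint ℝ (v a) (v b)) (midpoint ℝ (v c) (v d)) := by
    intro c d hcd hne hle hca
    have hab' : (T.deleteEdges {s(c, d)}).Adj a b := by
      rw [SimpleGraph.deleteEdges_adj, Set.mem_singleton_iff]; exact ⟨hab, hne⟩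
    exact _root_.dist_div_three_le_dist_midpoint_midpoint
      (hT.dist_le_of_reachable_deleteEdges hcd hca .rfl)
      (hT.dist_le_of_reachable_deleteEdges hcd (hca.trans hab'.reachable) .rfl) hle
  rcases (hT.1.connected.preconnected a c).reachable_deleteEdges_or d with hac | had
  · exact hcut hcd hne hle hac.symm
  · rw [Sym2.eq_swap (a := c)] at hne had
    rw [dist_comm (v c)] at hle ⊢
    rw [midpoint_comm (v c)]
    exact hcut hcd.symm hne hle had.symm

theorem IsMST.disjoint_ball_edgeMidpoint (hT : IsMST v T) {e f : Sym2 (Fin n)}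
    (he : e ∈ T.edgeSet) (hf : f ∈ T.edgeSet) (hne : e ≠ f) :
    Disjoint (ball (edgeMidpoint v e) (edgeLength v e / 6))
      (ball (edgeMidpoint v f) (edgeLength v f / 6)) := by
  wlog hle : edgeLength v e ≤ edgeLength v f generalizing e f
  · exact (this hf he hne.symm (le_of_not_ge hle)).symm
  induction e using Sym2.ind with | _ a b =>
  induction f using Sym2.ind with | _ c d =>
  simp only [edgeLength_mk, edgeMidpoint_mk] at hle ⊢
  apply ball_disjoint_ball
  linarith [hT.dist_div_three_le_dist_midpoint_midpoint he hf hne hle]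

end InnerProductSpace

theorem sum_pow_finrank_le_of_pairwiseDisjoint_ball {E ι : Type*} [NormedAddCommGroup E]
    [NormedSpace ℝ E] [FiniteDimensional ℝ E] [Nontrivial E] {s : Finset ι} {c : ι → E}
    {r : ι → ℝ} {x : E} {R : ℝ} (hr : ∀ i ∈ s, 0 ≤ r i) (hR : 0 ≤ R)
    (hdisj : (s : Set ι).PairwiseDisjoint fun i => ball (c i) (r i))
    (hsub : ∀ i ∈ s, ball (c i) (r i) ⊆ ball x R) :
    ∑ i ∈ s, r i ^ finrank ℝ E ≤ R ^ finrank ℝ E := by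
  borelize E
  set μ : Measure E := Measure.addHaar
  have hunit₀ : μ (ball 0 1) ≠ 0 := (measure_ball_pos μ 0 one_pos).ne'
  have hunit : μ (ball 0 1) ≠ ⊤ := measure_ball_lt_top.ne
  have hvol : (∑ i ∈ s, ENNReal.ofReal (r i ^ finrank ℝ E)) * μ (ball 0 1) ≤
      ENNReal.ofReal (R ^ finrank ℝ E) * μ (ball 0 1) := calc
    _ = ∑ i ∈ s, μ (ball (c i) (r i)) := by
      rw [sum_mul]
      exact sum_congr rfl fun i hi => (μ.addHaar_ball _ (hr i hi)).symm
    _ = μ (⋃ i ∈ s, ball (c i) (r i)) :=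
      (measure_biUnion_finset hdisj fun _ _ => measurableSet_ball).symm
    _ ≤ μ (ball x R) := measure_mono (Set.iUnion₂_subset hsub)
    _ = _ := μ.addHaar_ball _ hR
  rw [ENNReal.mul_le_mul_iff_left hunit₀ hunit,
    ← ENNReal.ofReal_sum_of_nonneg fun i hi => pow_nonneg (hr i hi) _] at hvol
  exact (ENNReal.ofReal_le_ofReal_iff (pow_nonneg hR _)).mp hvol

theorem IsMST.energy_finrank_le {E : Type*} [NormedAddCommGroup E] [InnerProductSpace ℝ E]
    [FiniteDimensional ℝ E] [Nontrivial E] {n : ℕ} {v : Fin n → E} {T : SimpleGraph (Fin n)}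
    (hT : IsMST v T) {c : E} {ρ : ℝ} (hρ : 0 ≤ ρ) (hv : ∀ i, v i ∈ closedBall c ρ) :
    energy v T (finrank ℝ E) ≤ (8 * ρ) ^ finrank ℝ E := by
  set S := T.edgeSet.toFinite.toFinset
  have hlen : ∀ e, edgeLength v e ≤ 2 * ρ := by
    intro e
    induction e using Sym2.ind with | _ i j =>
    exact (dist_triangle_right _ _ c).trans
      (by linarith [mem_closedBall.mp (hv i), mem_closedBall.mp (hv j)])
  have hmid : ∀ e, edgeMidpoint v e ∈ closedBall c ρ := by
    intro e
    induction e using Sym2.ind with | _ i j =>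
    exact (convex_closedBall c ρ).midpoint_mem (hv i) (hv j)
  have hpack :
      ∑ e ∈ S, (edgeLength v e / 6) ^ finrank ℝ E ≤ (4 / 3 * ρ) ^ finrank ℝ E := by
    refine sum_pow_finrank_le_of_pairwiseDisjoint_ball (x := c)
      (fun e _ => div_nonneg (edgeLength_nonneg v e) (by norm_num)) (by positivity)
      (fun e he f hf hne => hT.disjoint_ball_edgeMidpoint (by simpa [S] using he)
        (by simpa [S] using hf) hne) fun e _ => ball_subset_ball' ?_
    linarith [hlen e, mem_closedBall.mp (hmid e)]
  calc energy v T (finrank ℝ E) = ∑ e ∈ S, edgeLength v e ^ finrank ℝ E := by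
        rw [energy_eq_sum_edgeLength_rpow v _ (s := S) (by simp [S])]
        simp only [Real.rpow_natCast]
    _ = 6 ^ finrank ℝ E * ∑ e ∈ S, (edgeLength v e / 6) ^ finrank ℝ E := by
        rw [mul_sum]
        refine sum_congr rfl fun e _ => ?_
        rw [← mul_pow, mul_div_cancel₀ _ (by norm_num)]
    _ ≤ 6 ^ finrank ℝ E * (4 / 3 * ρ) ^ finrank ℝ E := by gcongr
    _ = (8 * ρ) ^ finrank ℝ E := by rw [← mul_pow]; ring_nf

theorem EuclideanSpace.norm_le_sqrt_card {ι : Type*} [Fintype ι] (x : EuclideanSpace ℝ ι)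
    (hx : ∀ i, |x i| ≤ 1) : ‖x‖ ≤ √(Fintype.card ι) := by
  rw [EuclideanSpace.norm_eq]
  gcongr
  calc ∑ i, ‖x i‖ ^ 2 ≤ ∑ _i : ι, (1 : ℝ) := by
        gcongr with i
        rw [Real.norm_eq_abs, sq_le_one_iff_abs_le_one, abs_abs]
        exact hx i
    _ = Fintype.card ι := by simp

/-- For every dimension `d ≥ 1` there is a constant `C = C(d) > 0` such that for all
`n ≥ 1`, all points `v 0, …, v (n-1)` in the cube `[0,1]^d` and every minimal spanning
tree `T` over them, `E_d(T) = Σ_{e ∈ T} ‖e‖^d ≤ C^d`, independently of `n`. -/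
theorem mst_energy_bound_critical (d : ℕ) (hd : 1 ≤ d) :
    ∃ C : ℝ, 0 < C ∧ ∀ n : ℕ, 1 ≤ n →
      ∀ v : Fin n → EuclideanSpace ℝ (Fin d), (∀ j i, v j i ∈ Set.Icc (0:ℝ) 1) →
      ∀ T : SimpleGraph (Fin n), IsMST v T →
        energy v T (d : ℝ) ≤ C ^ (d : ℝ) := by
  have : Nonempty (Fin d) := ⟨⟨0, hd⟩⟩
  refine ⟨8 * √d, by positivity, fun n _ v hv T hT => ?_⟩
  have hball : ∀ j, v j ∈ closedBall 0 √d := fun j => by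
    simpa using EuclideanSpace.norm_le_sqrt_card (v j) fun i =>
      abs_le.mpr ⟨by linarith [(hv j i).1], (hv j i).2⟩
  simpa [finrank_euclideanSpace_fin, Real.rpow_natCast] using
    hT.energy_finrank_le (Real.sqrt_nonneg _) hball
end

section
/- Let M be a metric space, ε > 0, let v_1, …, v_n ∈ M, and let T be a minimal spanning tree over v_1, …, v_n. If T has k edges {i,j} with d(v_i, v_j) > ε, then there exist k points among v_1, …, v_n whose pairwise distances are all ≥ (2/3)·ε (equivalently, the balls of radius ε/3 around these k points are pairwise disjoint). In particular, the number of edges of T of length greater than ε is at most the maximal number of pairwise disjoint balls of radius ε/3 in M. -/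
/-!
Root the tree at a vertex `r` and send each long edge to its endpoint farther from `r`; this is a
bijection onto the non-root vertices whose parent edge is long. For two such vertices `i ≠ j`, one
of them, say `i`, is not on the root path of the other, so deleting the edge from `i` to its parent
separates `i` from `j`. Exchanging that edge for `{i, j}` gives another spanning tree, hence by
minimality `dist (v i) (v j)` is at least the length of the deleted edge, which exceeds `ε`.
-/

namespace SimpleGraph.IsTree

variable {V : Type*} {G : SimpleGraph V} (hG : G.IsTree) (r : V)

noncomputable def rootPath (x : V) : G.Walk x r :=
  (hG.existsUnique_path x r).exists.choose

/-- Junk value at the root: `parent r r = r`. -/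
noncomputable def parent (x : V) : V :=
  (hG.rootPath r x).snd

variable {r}

lemma isPath_rootPath (x : V) : (hG.rootPath r x).IsPath :=
  (hG.existsUnique_path x r).exists.choose_spec

lemma eq_rootPath {x : V} {q : G.Walk x r} (hq : q.IsPath) : q = hG.rootPath r x :=
  (hG.existsUnique_path x r).unique hq (hG.isPath_rootPath x)

lemma rootPath_self : hG.rootPath r r = Walk.nil :=
  (hG.eq_rootPath Walk.IsPath.nil).symm

lemma adj_parent {x : V} (hx : x ≠ r) : G.Adj x (hG.parent r x) :=
  Walk.adj_snd (Walk.not_nil_of_ne hx)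

lemma rootPath_eq_cons_parent {x : V} (hx : x ≠ r) :
    hG.rootPath r x = Walk.cons (hG.adj_parent hx) (hG.rootPath r (hG.parent r x)) := by
  have hcons := (hG.rootPath r x).cons_tail_eq (Walk.not_nil_of_ne hx)
  have htail : (hG.rootPath r x).tail.IsPath := (hG.isPath_rootPath x).tail
  conv_lhs => rw [← hcons]
  congr 1
  exact hG.eq_rootPath htail

variable (r) in
lemma parent_eq_or_parent_eq {a b : V} (hab : G.Adj a b) :
    (a ≠ r ∧ hG.parent r a = b) ∨ (b ≠ r ∧ hG.parent r b = a) := by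
  by_cases hb : b ∈ (hG.rootPath r a).support
  · left
    refine ⟨?_, (hG.isAcyclic.eq_snd_of_adj_start (hG.isPath_rootPath a) hab hb).symm⟩
    rintro rfl
    simp only [rootPath_self, Walk.support_nil, List.mem_singleton] at hb
    exact hab.ne hb.symm
  · right
    have hpath := hG.eq_rootPath ((hG.isPath_rootPath a).cons hb (h := hab.symm))
    refine ⟨fun hbr => hb (hbr ▸ Walk.end_mem_support _), ?_⟩
    rw [parent, ← hpath, Walk.snd_cons]

lemma length_rootPath_lt {x y : V} (hy : y ∈ (hG.rootPath r x).support) (hne : y ≠ x) :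
    (hG.rootPath r y).length < (hG.rootPath r x).length := by
  classical
  rw [← hG.eq_rootPath ((hG.isPath_rootPath x).dropUntil hy)]
  exact Walk.length_dropUntil_lt_length hy hne

lemma eq_of_mem_support_rootPath {x y : V} (hy : y ∈ (hG.rootPath r x).support)
    (hx : x ∈ (hG.rootPath r y).support) : x = y := by
  by_contra hne
  exact lt_asymm (hG.length_rootPath_lt hy (Ne.symm hne)) (hG.length_rootPath_lt hx hne)

variable (r) in
lemma parent_injOn : Set.InjOn (fun x => s(x, hG.parent r x)) {x | x ≠ r} := by
  intro x hx y hy hxy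
  by_contra hne
  obtain ⟨hxp, hpy⟩ := (Sym2.eq_iff.mp hxy).resolve_left fun h => hne h.1
  have hlx := congrArg Walk.length (hG.rootPath_eq_cons_parent hx)
  have hly := congrArg Walk.length (hG.rootPath_eq_cons_parent hy)
  rw [Walk.length_cons, hpy] at hlx
  rw [Walk.length_cons, ← hxp] at hly
  omega

variable (r) in
lemma bijOn_parent :
    Set.BijOn (fun x => s(x, hG.parent r x)) {x | x ≠ r} G.edgeSet := by
  refine ⟨fun x hx => hG.adj_parent hx, hG.parent_injOn r, ?_⟩
  intro e he
  cases e with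
  | h a b =>
    rw [mem_edgeSet] at he
    rcases hG.parent_eq_or_parent_eq r he with ⟨ha, hpa⟩ | ⟨hb, hpb⟩
    · exact ⟨a, ha, hpa ▸ rfl⟩
    · exact ⟨b, hb, hpb ▸ Sym2.eq_swap⟩

/-- `c ∈ (rootPath r x).support` says that `x` lies in the subtree below `c`; only the parent edge
of `c` leaves that subtree. -/
lemma mem_support_rootPath_of_reachable {c x y : V}
    (hxy : (G.deleteEdges {s(c, hG.parent r c)}).Reachable x y)
    (hc : c ∈ (hG.rootPath r x).support) : c ∈ (hG.rootPath r y).support := by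
  obtain ⟨w⟩ := hxy
  induction w with
  | nil => exact hc
  | @cons x y z hadj _ ih =>
    apply ih
    rw [deleteEdges_adj, Set.mem_singleton_iff] at hadj
    rcases hG.parent_eq_or_parent_eq r hadj.1 with ⟨hx, rfl⟩ | ⟨hy, rfl⟩
    · rw [hG.rootPath_eq_cons_parent hx, Walk.support_cons, List.mem_cons] at hc
      exact hc.resolve_left (by rintro rfl; exact hadj.2 rfl)
    · rw [hG.rootPath_eq_cons_parent hy, Walk.support_cons]
      exact List.mem_cons_of_mem _ hc

variable (r) in
lemma not_reachable_deleteEdges_parent_or {x y : V} (hxy : x ≠ y) :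
    ¬(G.deleteEdges {s(x, hG.parent r x)}).Reachable x y ∨
      ¬(G.deleteEdges {s(y, hG.parent r y)}).Reachable y x := by
  by_contra! h
  exact hxy (hG.eq_of_mem_support_rootPath
    (hG.mem_support_rootPath_of_reachable h.2 (Walk.start_mem_support _))
    (hG.mem_support_rootPath_of_reachable h.1 (Walk.start_mem_support _)))

end SimpleGraph.IsTree

namespace SimpleGraph

variable {V : Type*} {G : SimpleGraph V}

lemma Preconnected.reachable_deleteEdges_or (hG : G.Preconnected) (a b z : V) :
    (G.deleteEdges {s(a, b)}).Reachable z a ∨ (G.deleteEdges {s(a, b)}).Reachable z b := by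
  set H := G.deleteEdges {s(a, b)}
  suffices ∀ {u w : V}, G.Walk u w → H.Reachable w a ∨ H.Reachable w b →
      H.Reachable u a ∨ H.Reachable u b from this (hG z a).some (Or.inl .rfl)
  intro u w p
  induction p with
  | nil => exact id
  | @cons u w _ hadj _ ih =>
    intro h
    by_cases he : s(u, w) = s(a, b)
    · rcases Sym2.eq_iff.mp he with ⟨rfl, -⟩ | ⟨rfl, -⟩
      · exact Or.inl .rfl
      · exact Or.inr .rfl
    · have hH : H.Adj u w := (deleteEdges_adj ..).mpr ⟨hadj, he⟩
      exact (ih h).imp hH.reachable.trans hH.reachable.trans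

lemma IsTree.deleteEdges_sup_edge_of_not_reachable (hG : G.IsTree) {a b x y : V}
    (hxy : ¬(G.deleteEdges {s(a, b)}).Reachable x y) :
    (G.deleteEdges {s(a, b)} ⊔ edge x y).IsTree := by
  set H := G.deleteEdges {s(a, b)}
  have hsplit := hG.connected.preconnected.reachable_deleteEdges_or a b
  have hle : H ≤ H ⊔ edge x y := le_sup_left
  have hadj : (H ⊔ edge x y).Adj x y :=
    Or.inr ((edge_adj ..).mpr ⟨Or.inl ⟨rfl, rfl⟩, by rintro rfl; exact hxy .rfl⟩)
  have hab : (H ⊔ edge x y).Reachable a b := by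
    rcases hsplit x with hx | hx <;> rcases hsplit y with hy | hy
    · exact absurd (hx.trans hy.symm) hxy
    · exact ((hx.mono hle).symm.trans hadj.reachable).trans (hy.mono hle)
    · exact ((hy.mono hle).symm.trans hadj.symm.reachable).trans (hx.mono hle)
    · exact absurd (hx.trans hy.symm) hxy
  refine ⟨(connected_iff_exists_forall_reachable _).mpr ⟨a, fun z => ?_⟩,
    (hG.isAcyclic.anti (deleteEdges_le _)).sup_edge_of_not_reachable hxy⟩
  rcases hsplit z with h | h
  · exact (h.mono hle).symm
  · exact hab.trans (h.mono hle).symm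

end SimpleGraph

lemma energy_sup_edge {X : Type*} [MetricSpace X] {n : ℕ} (v : Fin n → X)
    (G : SimpleGraph (Fin n)) (α : ℝ) {x y : Fin n} (hxy : x ≠ y) (hG : ¬G.Adj x y) :
    energy v (G ⊔ SimpleGraph.edge x y) α = energy v G α + dist (v x) (v y) ^ α := by
  have hedges : (G ⊔ SimpleGraph.edge x y).edgeSet.toFinite.toFinset =
      insert s(x, y) G.edgeSet.toFinite.toFinset := by
    ext e
    simp [SimpleGraph.edgeSet_edge_of_ne hxy]
  rw [energy, hedges, Finset.sum_insert (by simpa using hG), add_comm]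
  rfl

lemma IsMST.dist_le_of_not_reachable {X : Type*} [MetricSpace X] {n : ℕ} {v : Fin n → X}
    {T : SimpleGraph (Fin n)} (hT : IsMST v T) {a b x y : Fin n} (hab : T.Adj a b)
    (hxy : ¬(T.deleteEdges {s(a, b)}).Reachable x y) :
    dist (v a) (v b) ≤ dist (v x) (v y) := by
  have hne : x ≠ y := by
    rintro rfl
    exact hxy .rfl
  have hT_eq : T.deleteEdges {s(a, b)} ⊔ SimpleGraph.edge a b = T :=
    sdiff_sup_cancel ((SimpleGraph.edge_le_iff T).mpr (Or.inr hab))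
  have hT_energy := energy_sup_edge v (T.deleteEdges {s(a, b)}) 1 hab.ne (by simp)
  rw [hT_eq] at hT_energy
  have hmin := hT.2 _ (hT.1.deleteEdges_sup_edge_of_not_reachable hxy)
  rw [hT_energy, energy_sup_edge v _ 1 hne fun h => hxy h.reachable] at hmin
  simpa using hmin

theorem long_edges_give_separated_points_general {M : Type*} [MetricSpace M] {n : ℕ} (ε : ℝ)
    (v : Fin n → M) (T : SimpleGraph (Fin n)) (hT : IsMST v T) :
    ∃ s : Finset (Fin n),
      s.card = ({e ∈ T.edgeSet |
          ε < Sym2.lift ⟨fun i j => dist (v i) (v j), fun i j => dist_comm (v i) (v j)⟩ e}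
        ).toFinite.toFinset.card ∧
      ∀ i ∈ s, ∀ j ∈ s, i ≠ j → 2 / 3 * ε ≤ dist (v i) (v j) := by
  obtain ⟨r⟩ := hT.1.nonempty
  let long : Set (Fin n) := {x | x ≠ r} ∩ {x | ε < dist (v x) (v (hT.1.parent r x))}
  refine ⟨long.toFinite.toFinset, ?_, fun i hi j hj hij => ?_⟩
  · rw [← Set.ncard_eq_toFinset_card, ← Set.ncard_eq_toFinset_card]
    exact ((hT.1.bijOn_parent r).inter_mapsTo (fun _ hx => hx) Set.inter_subset_right
      (t₂ := {e | ε < Sym2.lift ⟨fun i j => dist (v i) (v j),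
        fun i j => dist_comm (v i) (v j)⟩ e})).ncard_eq
  rw [Set.Finite.mem_toFinset] at hi hj
  have hfar : ε < dist (v i) (v j) := by
    rcases hT.1.not_reachable_deleteEdges_parent_or r hij with h | h
    · exact hi.2.trans_le (hT.dist_le_of_not_reachable (hT.1.adj_parent hi.1) h)
    · rw [dist_comm]
      exact hj.2.trans_le (hT.dist_le_of_not_reachable (hT.1.adj_parent hj.1) h)
  linarith [dist_nonneg (x := v i) (y := v j)]

/-- Let `T` be a minimal spanning tree over points `v 0, …, v (n-1)` of a metric space.
If `T` has `k` edges of length `> ε`, then there are `k` indices whose points are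
pairwise at distance `≥ (2/3)·ε` (so the balls of radius `ε/3` around them are
pairwise disjoint); in particular the number of edges of `T` longer than `ε` is at most
the maximal number of pairwise disjoint balls of radius `ε/3` in `M`. -/
theorem long_edges_give_separated_points {M : Type*} [MetricSpace M] {n : ℕ} (ε : ℝ)
    (hε : 0 < ε) (v : Fin n → M) (T : SimpleGraph (Fin n)) (hT : IsMST v T) :
    ∃ s : Finset (Fin n),
      s.card = ({e ∈ T.edgeSet |
          ε < Sym2.lift ⟨fun i j => dist (v i) (v j), fun i j => dist_comm (v i) (v j)⟩ e}
        ).toFinite.toFinset.card ∧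
      ∀ i ∈ s, ∀ j ∈ s, i ≠ j → 2 / 3 * ε ≤ dist (v i) (v j) :=
  long_edges_give_separated_points_general ε v T hT
end
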